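/- Let F(z) be a formal power series with F(z) = 1 + B(z)F(z) + A(z)F(z)^2 where A(z), B(z) are polynomials with zero constant term, and suppose y·F(yz) ≡ F(z) mod (y−1) (automatic). Then the series M(y,z) := P(y,z)·F(yz) / (1 − Ã(y,z)·F(yz)·F(z)) equals (y·F(yz) − F(z))/(y−1), where, writing A(z) = Σ_{i∈A} a_i z^i, we set Ã(y,z) = Σ_{i∈A} a_i y^{i-1} z^i and P(y,z) = 1 + Σ_{i∈B} b_i z^i (1+⋯+y^{i-1}) F(z) + Σ_{i∈A} a_i z^i (1+⋯+y^{i-2}) F(z)^2 with B(z) = Σ_{i∈B} b_i z^i. -/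

import Mathlib

/-!
Write `y = C X` in `R[X]⟦X⟧`, `f = F(z)` and `g = F(yz)`. After multiplication by `y - 1` the
geometric sums telescope: `(y - 1) Σ b_i z^i (1 + ⋯ + y^(i-1)) = B(yz) - B(z)`,
`(y - 1) Σ a_i z^i (1 + ⋯ + y^(i-2)) = Ã - A(z)` with `y Ã = A(yz)`, and
`(y - 1) Σ f_n z^n (1 + ⋯ + y^n) = y g - f`. The claimed identity times `y - 1` is then a
consequence of the quadratic equations for `f` and `g` alone, and `y - 1` is cancellable
because `X - 1` is monic.
-/

open PowerSeries

namespace PowerSeries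

theorem rescale_C {R : Type*} [CommSemiring R] (a c : R) : rescale a (C c) = C c := by
  ext (_ | n) <;> simp [coeff_rescale, coeff_C]

theorem rescale_sum_C_mul_X_pow {R : Type*} [CommRing R] (a : R) (s : Finset ℕ) (c : ℕ → R) :
    rescale a (∑ i ∈ s, C (c i) * X ^ i) = ∑ i ∈ s, C (c i * a ^ i) * X ^ i := by
  rw [map_sum]
  refine Finset.sum_congr rfl fun i _ ↦ ?_
  rw [map_mul, map_pow, rescale_C, rescale_X, mul_pow, ← mul_assoc, ← map_pow, ← map_mul]

theorem isLeftRegular_C {R : Type*} [Semiring R] {r : R} (hr : IsLeftRegular r) :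
    IsLeftRegular (C r : R⟦X⟧) := fun u v huv ↦ by
  ext n
  exact hr (by simpa only [coeff_C_mul] using congrArg (coeff n) huv)

variable {S : Type*} [CommRing S]

theorem C_sub_one_mul_sum_geom (x : S) (s : Finset ℕ) (c : ℕ → S) (m : ℕ → ℕ) :
    (C x - 1) * ∑ i ∈ s, C (c i * ∑ j ∈ Finset.range (m i), x ^ j) * X ^ i =
      ∑ i ∈ s, C (c i * x ^ m i) * X ^ i - ∑ i ∈ s, C (c i) * X ^ i := by
  rw [Finset.mul_sum, ← Finset.sum_sub_distrib]
  refine Finset.sum_congr rfl fun i _ ↦ ?_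
  rw [← mul_assoc, ← map_one C, ← map_sub, ← map_mul, ← sub_mul, ← map_sub]
  congr 2
  linear_combination c i * geom_sum_mul x (m i)

theorem C_mul_sum_C_mul_pow_pred (x : S) {s : Finset ℕ} (hs : ∀ i ∈ s, 0 < i) (c : ℕ → S) :
    C x * ∑ i ∈ s, C (c i * x ^ (i - 1)) * X ^ i = ∑ i ∈ s, C (c i * x ^ i) * X ^ i := by
  rw [Finset.mul_sum]
  refine Finset.sum_congr rfl fun i hi ↦ ?_
  rw [← mul_assoc, ← map_mul, mul_left_comm, ← pow_succ', Nat.sub_add_cancel (hs i hi)]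

theorem C_sub_one_mul_mk_geom (x : S) (f : S⟦X⟧) :
    (C x - 1) * mk (fun n ↦ coeff n f * ∑ j ∈ Finset.range (n + 1), x ^ j) =
      C x * rescale x f - f := by
  ext n
  simp only [sub_mul, one_mul, map_sub, coeff_C_mul, coeff_mk, coeff_rescale]
  linear_combination coeff n f * geom_sum_mul x (n + 1)

theorem mk_coeff_map {R : Type*} [Semiring R] (φ : R →+* S) (F : R⟦X⟧) :
    mk (fun n ↦ φ (coeff n F)) = map φ F := by
  ext n; rw [coeff_mk, coeff_map]

theorem mk_coeff_map_mul_pow {R : Type*} [Semiring R] (φ : R →+* S) (x : S) (F : R⟦X⟧) :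
    mk (fun n ↦ φ (coeff n F) * x ^ n) = rescale x (map φ F) := by
  ext n; rw [coeff_mk, coeff_rescale, coeff_map, mul_comm]

end PowerSeries

theorem motzkin_identity_mul_sub_one {S : Type*} [CommRing S] {y f g b b' a a' sb sa t G : S}
    (hf : f = 1 + b * f + a * f ^ 2) (hg : g = 1 + b' * g + a' * g ^ 2)
    (hb : (y - 1) * sb = b' - b) (ha : (y - 1) * sa = t - a) (ht : y * t = a')
    (hG : (y - 1) * G = y * g - f) :
    (y - 1) * ((1 + sb * f + sa * f ^ 2) * g) = (y - 1) * (G * (1 - t * g * f)) := by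
  linear_combination f * g * hb + f ^ 2 * g * ha + g ^ 2 * f * ht + (t * g * f - 1) * hG +
    g * hf - f * hg

theorem motzkin_type_algebraic_core_general {R : Type*} [CommRing R] (A B : Finset ℕ)
    (hA : ∀ i ∈ A, 0 < i) (a b : ℕ → R)
    (F : PowerSeries R)
    (hF : F = 1 + (∑ i ∈ B, PowerSeries.C (b i) * PowerSeries.X ^ i) * F +
               (∑ i ∈ A, PowerSeries.C (a i) * PowerSeries.X ^ i) * F ^ 2)
    (W : PowerSeries (Polynomial R))
    (hW : W * (1 - (∑ i ∈ A, PowerSeries.C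
                      (Polynomial.C (a i) * Polynomial.X ^ (i - 1)) * PowerSeries.X ^ i) *
                   (PowerSeries.mk fun n =>
                     Polynomial.C (PowerSeries.coeff n F) * Polynomial.X ^ n) *
                   (PowerSeries.mk fun n =>
                     Polynomial.C (PowerSeries.coeff n F))) = 1) :
    (1 + (∑ i ∈ B, PowerSeries.C
            (Polynomial.C (b i) * ∑ j ∈ Finset.range i, Polynomial.X ^ j) *
            PowerSeries.X ^ i) *
          (PowerSeries.mk fun n => Polynomial.C (PowerSeries.coeff n F)) +
         (∑ i ∈ A, PowerSeries.C
            (Polynomial.C (a i) * ∑ j ∈ Finset.range (i - 1), Polynomial.X ^ j) *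
            PowerSeries.X ^ i) *
          (PowerSeries.mk fun n => Polynomial.C (PowerSeries.coeff n F)) ^ 2) *
      (PowerSeries.mk fun n =>
        Polynomial.C (PowerSeries.coeff n F) * Polynomial.X ^ n) * W =
    PowerSeries.mk fun n =>
      Polynomial.C (PowerSeries.coeff n F) * ∑ j ∈ Finset.range (n + 1), Polynomial.X ^ j := by
  have hf := congrArg (map Polynomial.C) hF
  simp only [map_add, map_mul, map_one, map_pow, map_sum, map_C, map_X] at hf
  have hg := congrArg (rescale Polynomial.X) hf
  simp only [map_add, map_mul, map_one, map_pow] at hg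
  rw [rescale_sum_C_mul_X_pow, rescale_sum_C_mul_X_pow] at hg
  have hG := C_sub_one_mul_mk_geom Polynomial.X (map Polynomial.C F)
  simp only [coeff_map] at hG
  have key := motzkin_identity_mul_sub_one hf hg
    (C_sub_one_mul_sum_geom Polynomial.X B (fun i ↦ Polynomial.C (b i)) fun i ↦ i)
    (C_sub_one_mul_sum_geom Polynomial.X A (fun i ↦ Polynomial.C (a i)) fun i ↦ i - 1)
    (C_mul_sum_C_mul_pow_pred Polynomial.X hA fun i ↦ Polynomial.C (a i)) hG
  have hreg : IsLeftRegular (C Polynomial.X - 1 : (Polynomial R)⟦X⟧) := by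
    simpa using isLeftRegular_C (Polynomial.monic_X_sub_C (1 : R)).isRegular.left
  rw [mk_coeff_map, mk_coeff_map_mul_pow] at hW ⊢
  rw [hreg key, mul_assoc, mul_comm (1 - _) W, hW, mul_one]

/-- The algebraic core of the Motzkin-type Chung-Feller theorem (Class 1).
Let `F` satisfy `F = 1 + B(z)F + A(z)F²` with `A(z) = Σ_{i∈A} a_i z^i`,
`B(z) = Σ_{i∈B} b_i z^i` having zero constant term. With
`Ã(y,z) = Σ_{i∈A} a_i y^{i-1} z^i` and
`P(y,z) = 1 + Σ_{i∈B} b_i z^i(1+⋯+y^{i-1})F(z) + Σ_{i∈A} a_i z^i(1+⋯+y^{i-2})F(z)²`,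
the series `M(y,z) = P(y,z)·F(yz)/(1 − Ã(y,z)·F(yz)·F(z))` equals
`(y·F(yz) − F(z))/(y−1) = Σ_n f_n z^n(1+y+⋯+y^n)`. -/
theorem motzkin_type_algebraic_core {R : Type*} [CommRing R] (A B : Finset ℕ)
    (hA : ∀ i ∈ A, 0 < i) (hB : ∀ i ∈ B, 0 < i) (a b : ℕ → R)
    (F : PowerSeries R)
    (hF : F = 1 + (∑ i ∈ B, PowerSeries.C (b i) * PowerSeries.X ^ i) * F +
               (∑ i ∈ A, PowerSeries.C (a i) * PowerSeries.X ^ i) * F ^ 2)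
    (W : PowerSeries (Polynomial R))
    (hW : W * (1 - (∑ i ∈ A, PowerSeries.C
                      (Polynomial.C (a i) * Polynomial.X ^ (i - 1)) * PowerSeries.X ^ i) *
                   (PowerSeries.mk fun n =>
                     Polynomial.C (PowerSeries.coeff n F) * Polynomial.X ^ n) *
                   (PowerSeries.mk fun n =>
                     Polynomial.C (PowerSeries.coeff n F))) = 1) :
    (1 + (∑ i ∈ B, PowerSeries.C
            (Polynomial.C (b i) * ∑ j ∈ Finset.range i, Polynomial.X ^ j) *
            PowerSeries.X ^ i) *
          (PowerSeries.mk fun n => Polynomial.C (PowerSeries.coeff n F)) +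
         (∑ i ∈ A, PowerSeries.C
            (Polynomial.C (a i) * ∑ j ∈ Finset.range (i - 1), Polynomial.X ^ j) *
            PowerSeries.X ^ i) *
          (PowerSeries.mk fun n => Polynomial.C (PowerSeries.coeff n F)) ^ 2) *
      (PowerSeries.mk fun n =>
        Polynomial.C (PowerSeries.coeff n F) * Polynomial.X ^ n) * W =
    PowerSeries.mk fun n =>
      Polynomial.C (PowerSeries.coeff n F) * ∑ j ∈ Finset.range (n + 1), Polynomial.X ^ j :=
  motzkin_type_algebraic_core_general A B hA a b F hF W hW
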